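/- Let N ≥ 2, let Δ_C be the degree sequence of the path (chain) on N vertices, and let T be any tree on N vertices. Then Δ_C ≼ Δ_T, with Δ_C = Δ_T if and only if T is a path. -/

import Mathlib

/-- Degree of a vertex `v` in a simple graph `G` on a finite vertex set. -/
noncomputable def deg {V : Type*} [Fintype V] (G : SimpleGraph V) (v : V) : ℕ :=
  letI := Classical.decEq V
  letI := Classical.decRel G.Adj
  G.degree v

/-- The degree sequence of a graph on `Fin N`, arranged in decreasing order. -/
noncomputable def degSeq {N : ℕ} (G : SimpleGraph (Fin N)) : List ℕ :=
  ((Finset.univ.val.map (deg G)).sort (· ≤ ·)).reverse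

/-- Generalized (prefix-sum) majorization: `X ≼ Y`. -/
def Maj (X Y : List ℕ) : Prop := ∀ j : ℕ, (X.take j).sum ≤ (Y.take j).sum

/-- A basic tree transfer: choose an edge `{v,w}` with `deg v ≥ 2` and a vertex `u ≠ v` with
`deg u ≥ deg v` lying in the same connected component as `v` after deleting the edge `{v,w}`;
delete the edge `{v,w}` and add the edge `{u,w}`. -/
def BasicTreeTransfer {V : Type*} [Fintype V] (T T' : SimpleGraph V) : Prop :=
  ∃ v w u : V, T.Adj v w ∧ 2 ≤ deg T v ∧ u ≠ v ∧ deg T v ≤ deg T u ∧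
    (T.deleteEdges {s(v, w)}).Reachable u v ∧
    T' = (T.deleteEdges {s(v, w)}) ⊔ SimpleGraph.fromEdgeSet {s(u, w)}

/-- The decreasing rearrangement of a list of naturals. -/
noncomputable def sortDesc (l : List ℕ) : List ℕ :=
  (Multiset.sort (↑l : Multiset ℕ) (· ≤ ·)).reverse

/-- A path (chain) graph: a tree in which every vertex has degree at most 2. -/
def IsPathGraph {V : Type*} [Fintype V] (G : SimpleGraph V) : Prop :=
  G.IsTree ∧ ∀ v, deg G v ≤ 2

/-- The degree sequence of the chain on `N ≥ 2` vertices: `(2,…,2,1,1)`. -/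
def chainSeq (N : ℕ) : List ℕ := List.replicate (N - 2) 2 ++ List.replicate 2 1

/-- A basic transfer on a decreasing list: add 1 to entry `i`, subtract 1 from entry `j ≥ 1`,
and rearrange in decreasing order. -/
def BasicTransfer (X Y : List ℕ) : Prop :=
  ∃ i j : ℕ, i < X.length ∧ j < X.length ∧ i ≠ j ∧ 1 ≤ X.getD j 0 ∧
    Y = sortDesc ((X.set i (X.getD i 0 + 1)).set j (X.getD j 0 - 1))

/-!
A tree on `N` vertices has `N - 1` edges, so its degrees are `N` positive integers summing to
`2N - 2`, while the prefix sums of the chain's sequence `(2,…,2,1,1)` are `min (2j) (N + j - 2)`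
(for `j ≤ N`). In the decreasing degree sequence of a tree, either the `j`-th entry is at least
`2`, and then so are the first `j` entries, whose sum is at least `2j`; or it is `1`, and then the
last `N - j` entries are all `1`, so the first `j` entries sum to `(2N - 2) - (N - j)`.
If moreover all degrees are at most `2`, the counts of twos and ones are forced to be `N - 2`
and `2`.
-/

section Tree

variable {V : Type*} [Fintype V]

lemma deg_eq_degree [DecidableEq V] (G : SimpleGraph V) [DecidableRel G.Adj] (v : V) :
    deg G v = G.degree v := by
  unfold deg
  congr!

lemma SimpleGraph.IsTree.sum_deg {T : SimpleGraph V} (hT : T.IsTree) :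
    ∑ v, deg T v = 2 * Fintype.card V - 2 := by
  classical
  have hedges := hT.card_edgeFinset
  simp only [deg_eq_degree, T.sum_degrees_eq_twice_card_edges]
  omega

lemma SimpleGraph.IsTree.one_le_deg [Nontrivial V] {T : SimpleGraph V} (hT : T.IsTree) (v : V) :
    1 ≤ deg T v := by
  classical
  rw [deg_eq_degree]
  exact hT.connected.preconnected.degree_pos_of_nontrivial v

end Tree

section DegSeq

variable {N : ℕ} (T : SimpleGraph (Fin N))

lemma coe_degSeq : (degSeq T : Multiset ℕ) = Finset.univ.val.map (deg T) := by
  rw [degSeq, Multiset.coe_reverse, Multiset.sort_eq]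

lemma mem_degSeq {x : ℕ} : x ∈ degSeq T ↔ ∃ v, deg T v = x := by
  rw [← Multiset.mem_coe, coe_degSeq]
  simp

lemma length_degSeq : (degSeq T).length = N := by
  rw [← Multiset.coe_card, coe_degSeq]
  simp

lemma sum_degSeq : (degSeq T).sum = ∑ v, deg T v := by
  rw [← Multiset.sum_coe, coe_degSeq]
  rfl

lemma pairwise_degSeq : (degSeq T).Pairwise (· ≥ ·) := by
  simpa [degSeq, List.pairwise_reverse, flip] using
    Multiset.pairwise_sort (Finset.univ.val.map (deg T)) (· ≤ ·)

end DegSeq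

lemma Multiset.eq_replicate_add_replicate {α : Type*} [DecidableEq α] {M : Multiset α} {a b : α}
    (hab : a ≠ b) (h : ∀ x ∈ M, x = a ∨ x = b) :
    M = replicate (M.count a) a + replicate (M.count b) b := by
  have hb : M.filter (fun x => ¬x = a) = M.filter (· = b) :=
    filter_congr fun x hx => by rcases h x hx with rfl | rfl <;> simp [hab, Ne.symm hab]
  rw [← filter_eq', ← filter_eq', ← hb, filter_add_not]

section ChainSeq

lemma sum_take_chainSeq (N j : ℕ) :
    ((chainSeq N).take j).sum = 2 * min j (N - 2) + min (j - (N - 2)) 2 := by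
  rw [chainSeq, List.take_append, List.sum_append, List.take_replicate, List.take_replicate,
    List.sum_replicate, List.sum_replicate, List.length_replicate]
  simp [mul_comm]

lemma pairwise_chainSeq (N : ℕ) : (chainSeq N).Pairwise (· ≥ ·) := by
  simp [chainSeq, List.pairwise_append, List.pairwise_replicate, List.mem_replicate]

lemma le_two_of_mem_chainSeq {N x : ℕ} (hx : x ∈ chainSeq N) : x ≤ 2 := by
  simp only [chainSeq, List.mem_append, List.mem_replicate] at hx
  omega

lemma maj_chainSeq_of_pairwise {N : ℕ} {L : List ℕ} (hN : 2 ≤ N) (hlen : L.length = N)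
    (hL : L.Pairwise (· ≥ ·)) (hpos : ∀ x ∈ L, 1 ≤ x) (hsum : L.sum = 2 * N - 2) :
    Maj (chainSeq N) L := by
  intro j
  rw [sum_take_chainSeq]
  rcases le_or_gt L.length j with hj | hj
  · rw [List.take_of_length_le hj]
    omega
  have hsplit := L.sum_take_add_sum_drop j
  have hdrop := List.drop_eq_getElem_cons hj
  rcases le_or_gt 2 L[j] with hbig | hsmall
  · have htake : ∀ x ∈ L.take j, 2 ≤ x := fun x hx =>
      hbig.trans (hL.rel_of_mem_take_of_mem_drop hx (hdrop ▸ List.mem_cons_self))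
    have := (L.take j).card_nsmul_le_sum 2 htake
    simp only [smul_eq_mul, List.length_take] at this
    omega
  · have hones : ∀ x ∈ L.drop j, x = 1 := by
      have hhead := hdrop ▸ hL.drop (i := j)
      intro x hx
      have hle : x ≤ L[j] := by
        rw [hdrop, List.mem_cons] at hx
        exact hx.elim (·.le) (List.rel_of_pairwise_cons hhead)
      have := hpos x (List.mem_of_mem_drop hx)
      omega
    have := (L.drop j).sum_eq_card_nsmul 1 hones
    simp only [smul_eq_mul, List.length_drop] at this
    omega

lemma eq_chainSeq_of_pairwise {N : ℕ} {L : List ℕ} (hN : 2 ≤ N) (hlen : L.length = N)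
    (hL : L.Pairwise (· ≥ ·)) (hbounds : ∀ x ∈ L, 1 ≤ x ∧ x ≤ 2) (hsum : L.sum = 2 * N - 2) :
    L = chainSeq N := by
  have hdecomp := Multiset.eq_replicate_add_replicate (M := (L : Multiset ℕ)) (a := 2) (b := 1)
    (by decide) fun x hx => by have := hbounds x hx; omega
  have hcard := congrArg Multiset.card hdecomp
  have hsum' := congrArg Multiset.sum hdecomp
  simp only [Multiset.coe_card, Multiset.sum_coe, Multiset.card_add, Multiset.card_replicate,
    Multiset.sum_add, Multiset.sum_replicate, smul_eq_mul] at hcard hsum'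
  have hperm : L.Perm (chainSeq N) := by
    rw [← Multiset.coe_eq_coe, hdecomp, chainSeq, ← Multiset.coe_add, Multiset.coe_replicate,
      Multiset.coe_replicate]
    congr 2 <;> omega
  have : Std.Antisymm (α := ℕ) (· ≥ ·) := ⟨fun _ _ h₁ h₂ => le_antisymm h₂ h₁⟩
  exact hperm.eq_of_pairwise' hL (pairwise_chainSeq _)

end ChainSeq

/-- the degree sequence of the chain on `N` vertices is majorized by the degree
sequence of any tree `T` on `N` vertices, with equality if and only if `T` is a path. -/
theorem stmt_7 {N : ℕ} (hN : 2 ≤ N) (T : SimpleGraph (Fin N)) (hT : T.IsTree) :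
    Maj (chainSeq N) (degSeq T) ∧ (chainSeq N = degSeq T ↔ IsPathGraph T) := by
  have : Nontrivial (Fin N) := Fin.nontrivial_iff_two_le.mpr hN
  have hlen := length_degSeq T
  have hsum : (degSeq T).sum = 2 * N - 2 := by
    rw [sum_degSeq, hT.sum_deg, Fintype.card_fin]
  have hpos : ∀ x ∈ degSeq T, 1 ≤ x := fun x hx => by
    obtain ⟨v, rfl⟩ := (mem_degSeq T).mp hx
    exact hT.one_le_deg v
  refine ⟨maj_chainSeq_of_pairwise hN hlen (pairwise_degSeq T) hpos hsum, fun hchain => ?_, ?_⟩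
  · refine ⟨hT, fun v => le_two_of_mem_chainSeq (N := N) ?_⟩
    rw [hchain]
    exact (mem_degSeq T).mpr ⟨v, rfl⟩
  · rintro ⟨-, hle⟩
    refine (eq_chainSeq_of_pairwise hN hlen (pairwise_degSeq T)
      (fun x hx => ⟨hpos x hx, ?_⟩) hsum).symm
    obtain ⟨v, rfl⟩ := (mem_degSeq T).mp hx
    exact hle v
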